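/- Let β be an action of a countable group Γ on a compact metrizable space X, let U ⊆ X be a nonempty open set, and suppose there exist open β-bisections B¹, B² with r(Bⁱ) ⊆ U ⊆ s(Bⁱ) for i = 1,2 and r(B¹) ∩ r(B²) = ∅. Then for every N ∈ ℕ there exist N open β-bisections V¹,…,V^N with r(Vⁱ) ⊆ U ⊆ s(Vⁱ) for each i and with the ranges r(V¹),…,r(V^N) pairwise disjoint. -/

import Mathlib

open Set Filter Topology Pointwise

section HomeoMetric

variable {X : Type*} [MetricSpace X] [CompactSpace X]

/-- The metric `d(φ,ψ) = max_x d(φ x, ψ x) + max_x d(φ⁻¹ x, ψ⁻¹ x)` on the homeomorphism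
group of a compact metric space. -/
noncomputable def homeoDist (φ ψ : X ≃ₜ X) : ℝ :=
  (⨆ x : X, dist (φ x) (ψ x)) + ⨆ x : X, dist (φ.symm x) (ψ.symm x)

/-- The topology on the homeomorphism group `H(X)` induced by the metric `homeoDist`. -/
noncomputable instance Homeomorph.metricTopology : TopologicalSpace (X ≃ₜ X) :=
  TopologicalSpace.generateFrom
    {B | ∃ (φ : X ≃ₜ X) (ε : ℝ), B = {ψ : X ≃ₜ X | homeoDist φ ψ < ε}}

end HomeoMetric

section Actions

variable (Γ : Type*) [Group Γ] (X : Type*) [TopologicalSpace X]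

/-- A family of homeomorphisms indexed by a group is an action if it is multiplicative:
`β (g * h) = β g ∘ β h`. -/
def IsAction (β : Γ → X ≃ₜ X) : Prop :=
  ∀ g h : Γ, β (g * h) = (β h).trans (β g)

/-- The space `H(Γ, X)` of actions of `Γ` on `X` by homeomorphisms, topologized as a
subspace of `∏_Γ H(X)`. -/
abbrev ActionSpace := {β : Γ → X ≃ₜ X // IsAction Γ X β}

variable {Γ X}

/-- An action is minimal if every orbit is dense. -/
def IsMinimalAction (β : Γ → X ≃ₜ X) : Prop :=
  ∀ x : X, Dense (range fun g : Γ => β g x)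

/-- An action is topologically free if the fixed point set of every nontrivial group
element has empty interior. -/
def IsTopFreeAction (β : Γ → X ≃ₜ X) : Prop :=
  ∀ s : Γ, s ≠ 1 → interior {x : X | β s x = x} = (∅ : Set X)

end Actions

/-- The space of probability measures on a countable discrete group `Γ`, with the topology
of pointwise convergence. -/
abbrev ProbMeas (Γ : Type*) := {μ : Γ → ℝ // (∀ g, 0 ≤ μ g) ∧ HasSum μ 1}

/-- An action of a countable discrete group on a compact space is (topologically) amenable
if there is a sequence of continuous maps `μ_n : Z → Prob(Γ)` with
`sup_{z ∈ Z} ‖s • μ_n^z - μ_n^{s•z}‖₁ → 0` for every `s ∈ Γ`, where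
`(s • μ)(g) = μ (s⁻¹ g)`. -/
def IsAmenableAction {Γ Z : Type*} [Group Γ] [TopologicalSpace Z] (α : Γ → Z ≃ₜ Z) : Prop :=
  ∃ μ : ℕ → Z → ProbMeas Γ,
    (∀ n, Continuous (μ n)) ∧
    ∀ s : Γ, Tendsto
      (fun n => ⨆ z : Z, ∑' g : Γ, |(μ n z).1 (s⁻¹ * g) - (μ n (α s z)).1 g|)
      atTop (𝓝 0)

section SkewProduct

variable {Γ : Type*} [Group Γ] {Z Y G : Type*} [TopologicalSpace Z] [TopologicalSpace Y]
  [TopologicalSpace G] [Group G] [IsTopologicalGroup G] [MulAction G Y] [ContinuousSMul G Y]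

/-- An action of a topological group on a space is minimal if every orbit is dense. -/
def IsMinimalSMul (G Y : Type*) [TopologicalSpace Y] [SMul G Y] : Prop :=
  ∀ y : Y, Dense (range fun g : G => g • y)

/-- An action of a group on a space has the `m`-filling property if every nonempty open set
has `m` group translates which cover the space. -/
def SMulFilling (G Y : Type*) [TopologicalSpace Y] [SMul G Y] (m : ℕ) : Prop :=
  ∀ V : Set Y, IsOpen V → V.Nonempty → ∃ g : Fin m → G, (⋃ i, g i • V) = univ

/-- The homeomorphism `H(z, y) = (z, h_z • y)` of `Z × Y` associated with a continuous map
`h : Z → 𝒢`; the set of these is `𝒢_s`. -/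
def skewHomeo (h : C(Z, G)) : (Z × Y) ≃ₜ (Z × Y) where
  toFun p := (p.1, h p.1 • p.2)
  invFun p := (p.1, (h p.1)⁻¹ • p.2)
  left_inv p := by simp
  right_inv p := by simp
  continuous_toFun :=
    continuous_fst.prodMk ((h.continuous.comp continuous_fst).smul continuous_snd)
  continuous_invFun :=
    continuous_fst.prodMk (((h.continuous.comp continuous_fst).inv).smul continuous_snd)

/-- The diagonal action `ᾱ_s(z, y) = (α_s z, y)` on `Z × Y`. -/
def diagAction (α : Γ → Z ≃ₜ Z) (Y : Type*) [TopologicalSpace Y] (s : Γ) :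
    (Z × Y) ≃ₜ (Z × Y) :=
  (α s).prodCongr (Homeomorph.refl Y)

/-- The set `S_𝒢(α)` of all conjugates `H⁻¹ ∘ ᾱ ∘ H` of the diagonal action `ᾱ` by
homeomorphisms `H ∈ 𝒢_s`. -/
def skewPerturbations (α : Γ → Z ≃ₜ Z) (Y G : Type*) [TopologicalSpace Y]
    [TopologicalSpace G] [Group G] [IsTopologicalGroup G] [MulAction G Y]
    [ContinuousSMul G Y] : Set (Γ → (Z × Y) ≃ₜ (Z × Y)) :=
  {β | ∃ h : C(Z, G), β = fun s =>
    (skewHomeo h).trans ((diagAction α Y s).trans (skewHomeo h).symm)}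

end SkewProduct

section Bisections

variable {Γ X : Type*} [Group Γ] [TopologicalSpace X]

/-- An open `β`-bisection: a family `V = (V_g)_{g ∈ Γ}` of open sets whose members are
pairwise disjoint and whose translates `β_g(V_g)` are pairwise disjoint.  (These correspond
to open `G`-sets of the transformation groupoid `X ⋊_β Γ`.) -/
def IsOpenBisection (β : Γ → X ≃ₜ X) (V : Γ → Set X) : Prop :=
  (∀ g, IsOpen (V g)) ∧
  (∀ g h : Γ, g ≠ h → Disjoint (V g) (V h)) ∧
  (∀ g h : Γ, g ≠ h → Disjoint (β g '' V g) (β h '' V h))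

/-- The source `s(V) = ∪_g V_g` of a bisection. -/
def bisectionSource (V : Γ → Set X) : Set X := ⋃ g : Γ, V g

/-- The range `r(V) = ∪_g β_g(V_g)` of a bisection. -/
def bisectionRange (β : Γ → X ≃ₜ X) (V : Γ → Set X) : Set X := ⋃ g : Γ, β g '' V g

/-- `r(V W) = ∪_g β_g(V_g ∩ W)` for an open set `W`. -/
def bisectionRangeOn (β : Γ → X ≃ₜ X) (V : Γ → Set X) (W : Set X) : Set X :=
  ⋃ g : Γ, β g '' (V g ∩ W)

/-- The weak `n`-filling property of an action: for every nonempty open `W` there are `n`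
open bisections `V¹, …, Vⁿ` with `∪ᵢ r(Vⁱ W) = X`. -/
def HasWeakFilling (β : Γ → X ≃ₜ X) (n : ℕ) : Prop :=
  ∀ W : Set X, IsOpen W → W.Nonempty →
    ∃ V : Fin n → Γ → Set X, (∀ i, IsOpenBisection β (V i)) ∧
      (⋃ i, bisectionRangeOn β (V i) W) = univ

/-- Pure infiniteness of an action: every nonempty open `U` contains a nonempty open `V`
admitting two open bisections with ranges disjoint subsets of `V` and sources containing
`V`. -/
def IsPurelyInfiniteAction (β : Γ → X ≃ₜ X) : Prop :=
  ∀ U : Set X, IsOpen U → U.Nonempty →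
    ∃ V : Set X, V ⊆ U ∧ IsOpen V ∧ V.Nonempty ∧
      ∃ B₁ B₂ : Γ → Set X, IsOpenBisection β B₁ ∧ IsOpenBisection β B₂ ∧
        bisectionRange β B₁ ⊆ V ∧ V ⊆ bisectionSource B₁ ∧
        bisectionRange β B₂ ⊆ V ∧ V ⊆ bisectionSource B₂ ∧
        Disjoint (bisectionRange β B₁) (bisectionRange β B₂)

end Bisections

/-!
Open bisections compose like partial homeomorphisms: `V W` is again an open bisection, its range
lies in `r(V)`, its source contains `s(W)` as soon as `r(W) ⊆ s(V)`, and since `V` acts injectively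
on its source, composing with `V` preserves disjointness of ranges. Hence `B₂, B₁B₂, B₁B₁B₂, …`
have pairwise disjoint ranges in `U`: the range of `B₂` misses the later ones, which lie in
`r(B₁)`, and any two later ones are the images under `B₁` of two earlier ones.
-/

section Composition

variable {Γ X : Type*} [Group Γ] [TopologicalSpace X] {β : Γ → X ≃ₜ X}

/-- The product `V W` in the transformation groupoid: first `W`, then `V`. -/
def bisectionComp (β : Γ → X ≃ₜ X) (V W : Γ → Set X) : Γ → Set X :=
  fun g => ⋃ h : Γ, W h ∩ β h ⁻¹' V (g * h⁻¹)

lemma IsAction.apply_mul (hact : IsAction Γ X β) (g h : Γ) (x : X) :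
    β (g * h) x = β g (β h x) := by
  rw [hact g h]; rfl

lemma IsAction.apply_mul_inv_apply (hact : IsAction Γ X β) (g h : Γ) (x : X) :
    β (g * h⁻¹) (β h x) = β g x := by
  rw [← hact.apply_mul, inv_mul_cancel_right]

lemma mem_bisectionRange_comp (hact : IsAction Γ X β) {V W : Γ → Set X} {y : X} :
    y ∈ bisectionRange β (bisectionComp β V W) ↔
      ∃ k z, z ∈ V k ∧ z ∈ bisectionRange β W ∧ β k z = y := by
  simp only [bisectionRange, bisectionComp, mem_iUnion, mem_image, mem_inter_iff, mem_preimage]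
  constructor
  · rintro ⟨g, x, ⟨h, hxW, hxV⟩, rfl⟩
    exact ⟨g * h⁻¹, β h x, hxV, ⟨h, x, hxW, rfl⟩, hact.apply_mul_inv_apply g h x⟩
  · rintro ⟨k, _, hzV, ⟨h, x, hxW, rfl⟩, rfl⟩
    exact ⟨k * h, x, ⟨h, hxW, by rwa [mul_inv_cancel_right]⟩, hact.apply_mul k h x⟩

lemma bisectionRange_comp_subset (hact : IsAction Γ X β) (V W : Γ → Set X) :
    bisectionRange β (bisectionComp β V W) ⊆ bisectionRange β V := by
  intro y hy
  obtain ⟨k, z, hzV, -, rfl⟩ := (mem_bisectionRange_comp hact).1 hy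
  exact mem_iUnion.2 ⟨k, mem_image_of_mem _ hzV⟩

lemma subset_bisectionSource_comp {V W : Γ → Set X} {U : Set X}
    (hWs : U ⊆ bisectionSource W) (hWr : bisectionRange β W ⊆ bisectionSource V) :
    U ⊆ bisectionSource (bisectionComp β V W) := by
  intro x hx
  obtain ⟨h, hxW⟩ := mem_iUnion.1 (hWs hx)
  obtain ⟨k, hk⟩ := mem_iUnion.1 (hWr (mem_iUnion.2 ⟨h, mem_image_of_mem _ hxW⟩))
  exact mem_iUnion.2 ⟨k * h, mem_iUnion.2 ⟨h, hxW, by rwa [mem_preimage, mul_inv_cancel_right]⟩⟩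

lemma IsOpenBisection.comp (hact : IsAction Γ X β) {V W : Γ → Set X}
    (hV : IsOpenBisection β V) (hW : IsOpenBisection β W) :
    IsOpenBisection β (bisectionComp β V W) := by
  refine ⟨fun g => isOpen_iUnion fun h => (hW.1 h).inter ((β h).isOpen_preimage.2 (hV.1 _)),
    fun g g' hgg' => Set.disjoint_left.2 ?_, fun g g' hgg' => Set.disjoint_left.2 ?_⟩
  · simp only [bisectionComp, mem_iUnion, mem_inter_iff, mem_preimage]
    rintro x ⟨h, hxW, hxV⟩ ⟨h', hxW', hxV'⟩
    rcases eq_or_ne h h' with rfl | hne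
    · exact Set.disjoint_left.1 (hV.2.1 _ _ (mul_left_injective h⁻¹ |>.ne hgg')) hxV hxV'
    · exact Set.disjoint_left.1 (hW.2.1 _ _ hne) hxW hxW'
  · simp only [bisectionComp, mem_image, mem_iUnion, mem_inter_iff, mem_preimage]
    rintro _ ⟨x, ⟨h, hxW, hxV⟩, rfl⟩ ⟨x', ⟨h', hxW', hxV'⟩, hxx'⟩
    rw [← hact.apply_mul_inv_apply g h, ← hact.apply_mul_inv_apply g' h'] at hxx'
    rcases eq_or_ne (g * h⁻¹) (g' * h'⁻¹) with heq | hne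
    · have hh : h ≠ h' := by
        rintro rfl
        exact hgg' (mul_right_cancel heq)
      rw [heq] at hxx'
      exact Set.disjoint_left.1 (hW.2.2 _ _ hh) ⟨x, hxW, rfl⟩
        ⟨x', hxW', (β _).injective hxx'⟩
    · exact Set.disjoint_left.1 (hV.2.2 _ _ hne) ⟨β h x, hxV, rfl⟩ ⟨β h' x', hxV', hxx'⟩

lemma IsOpenBisection.disjoint_bisectionRange_comp (hact : IsAction Γ X β) {V W₁ W₂ : Γ → Set X}
    (hV : IsOpenBisection β V) (hd : Disjoint (bisectionRange β W₁) (bisectionRange β W₂)) :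
    Disjoint (bisectionRange β (bisectionComp β V W₁))
      (bisectionRange β (bisectionComp β V W₂)) := by
  refine Set.disjoint_left.2 fun y h₁ h₂ => ?_
  obtain ⟨k, z, hzV, hzW, rfl⟩ := (mem_bisectionRange_comp hact).1 h₁
  obtain ⟨k', z', hzV', hzW', heq⟩ := (mem_bisectionRange_comp hact).1 h₂
  rcases eq_or_ne k k' with rfl | hne
  · obtain rfl := (β k).injective heq
    exact Set.disjoint_left.1 hd hzW hzW'
  · exact Set.disjoint_left.1 (hV.2.2 k k' hne) ⟨z, hzV, rfl⟩ ⟨z', hzV', heq⟩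

end Composition

section Families

variable {Γ X ι : Type*} [Group Γ] [TopologicalSpace X] {β : Γ → X ≃ₜ X} {U : Set X}

def IsDisjointBisectionFamilyOn (β : Γ → X ≃ₜ X) (U : Set X) (V : ι → Γ → Set X) : Prop :=
  (∀ i, IsOpenBisection β (V i)) ∧
  (∀ i, bisectionRange β (V i) ⊆ U) ∧
  (∀ i, U ⊆ bisectionSource (V i)) ∧
  Pairwise fun i j => Disjoint (bisectionRange β (V i)) (bisectionRange β (V j))

lemma IsDisjointBisectionFamilyOn.cons (hact : IsAction Γ X β) {B₁ B₂ : Γ → Set X}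
    (h₁ : IsOpenBisection β B₁) (h₂ : IsOpenBisection β B₂)
    (hr₁ : bisectionRange β B₁ ⊆ U) (hs₁ : U ⊆ bisectionSource B₁)
    (hr₂ : bisectionRange β B₂ ⊆ U) (hs₂ : U ⊆ bisectionSource B₂)
    (hdisj : Disjoint (bisectionRange β B₁) (bisectionRange β B₂))
    {N : ℕ} {V : Fin N → Γ → Set X} (hV : IsDisjointBisectionFamilyOn β U V) :
    IsDisjointBisectionFamilyOn β U
      (Fin.cons B₂ fun i => bisectionComp β B₁ (V i) : Fin (N + 1) → Γ → Set X) := by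
  obtain ⟨hVb, hVr, hVs, hVd⟩ := hV
  have hrange (i : Fin N) : bisectionRange β (bisectionComp β B₁ (V i)) ⊆ bisectionRange β B₁ :=
    bisectionRange_comp_subset hact _ _
  refine ⟨Fin.cases h₂ fun i => h₁.comp hact (hVb i),
    Fin.cases hr₂ fun i => (hrange i).trans hr₁,
    Fin.cases hs₂ fun i => subset_bisectionSource_comp (hVs i) ((hVr i).trans hs₁), ?_⟩
  intro i j hij
  induction i using Fin.cases <;> induction j using Fin.cases
  · exact absurd rfl hij
  · exact (hdisj.mono_left (hrange _)).symm
  · exact hdisj.mono_left (hrange _)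
  · exact h₁.disjoint_bisectionRange_comp hact (hVd fun h => hij (congrArg Fin.succ h))

end Families

theorem exists_many_disjoint_bisections_general
    {Γ X : Type*} [Group Γ] [TopologicalSpace X]
    (β : Γ → X ≃ₜ X) (hact : IsAction Γ X β)
    (U : Set X)
    (B₁ B₂ : Γ → Set X) (h₁ : IsOpenBisection β B₁) (h₂ : IsOpenBisection β B₂)
    (hr₁ : bisectionRange β B₁ ⊆ U) (hs₁ : U ⊆ bisectionSource B₁)
    (hr₂ : bisectionRange β B₂ ⊆ U) (hs₂ : U ⊆ bisectionSource B₂)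
    (hdisj : Disjoint (bisectionRange β B₁) (bisectionRange β B₂)) (N : ℕ) :
    ∃ V : Fin N → Γ → Set X,
      (∀ i, IsOpenBisection β (V i)) ∧
      (∀ i, bisectionRange β (V i) ⊆ U) ∧
      (∀ i, U ⊆ bisectionSource (V i)) ∧
      ∀ i j : Fin N, i ≠ j → Disjoint (bisectionRange β (V i)) (bisectionRange β (V j)) := by
  suffices ∃ V : Fin N → Γ → Set X, IsDisjointBisectionFamilyOn β U V from this
  induction N with
  | zero => exact ⟨finZeroElim, finZeroElim, finZeroElim, finZeroElim, fun i => i.elim0⟩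
  | succ N ih =>
    obtain ⟨V, hV⟩ := ih
    exact ⟨_, hV.cons hact h₁ h₂ hr₁ hs₁ hr₂ hs₂ hdisj⟩

/-- **Doubling lemma.**  If a nonempty open set `U` admits two open `β`-bisections with
disjoint ranges contained in `U` and sources containing `U`, then for every `N` there are
`N` open `β`-bisections with pairwise disjoint ranges contained in `U` and sources
containing `U`. -/
theorem exists_many_disjoint_bisections
    {Γ X : Type*} [Group Γ] [Countable Γ]
    [TopologicalSpace X] [CompactSpace X] [TopologicalSpace.MetrizableSpace X]
    (β : Γ → X ≃ₜ X) (hact : IsAction Γ X β)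
    (U : Set X) (hU : IsOpen U) (hUne : U.Nonempty)
    (B₁ B₂ : Γ → Set X) (h₁ : IsOpenBisection β B₁) (h₂ : IsOpenBisection β B₂)
    (hr₁ : bisectionRange β B₁ ⊆ U) (hs₁ : U ⊆ bisectionSource B₁)
    (hr₂ : bisectionRange β B₂ ⊆ U) (hs₂ : U ⊆ bisectionSource B₂)
    (hdisj : Disjoint (bisectionRange β B₁) (bisectionRange β B₂)) (N : ℕ) :
    ∃ V : Fin N → Γ → Set X,
      (∀ i, IsOpenBisection β (V i)) ∧
      (∀ i, bisectionRange β (V i) ⊆ U) ∧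
      (∀ i, U ⊆ bisectionSource (V i)) ∧
      ∀ i j : Fin N, i ≠ j → Disjoint (bisectionRange β (V i)) (bisectionRange β (V j)) :=
  exists_many_disjoint_bisections_general β hact U B₁ B₂ h₁ h₂ hr₁ hs₁ hr₂ hs₂ hdisj N
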